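/- arXiv:2502.01381 — 2 statements merged into one kernel-verified Lean document; each statement's English description precedes it below -/
import Mathlib

section
/- There exists a subset S ⊆ W such that d(S, G_1) = d(S, G_2) and d(S, G_1) + d(S, G_2) = (k − 1)/2 if and only if H contains a k-clique. -/
/-!
Let `a` and `b` be the numbers of vertices of `S` in `V_H` and in `Fin k`. Then
`m(S, G₂) = C(b, 2)`, while `m(S, G₁) ≤ C(a, 2)` with equality exactly when `S ∩ V_H` is a
clique of `H`. The two conditions say `m(S, G₁) = m(S, G₂) = (k - 1)(a + b)/4`. As `b ≤ k`,
this forces `a ≤ b`; then `C(b, 2) ≤ C(a, 2)` forces `a = b`, and the equation gives `b = k`,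
so `S ∩ V_H` is a `k`-clique. Conversely, a `k`-clique together with all of `Fin k` has both
densities equal to `C(k, 2)/(2k) = (k - 1)/4`.
-/

/-- Number of edges of `G` with both endpoints in `S`. -/
noncomputable def edgeCnt {W : Type*} (G : SimpleGraph W) (S : Finset W) : ℕ :=
  {e ∈ G.edgeSet | ∀ v ∈ e, v ∈ S}.ncard

/-- Density of the subgraph induced by `S` in `G`. -/
noncomputable def dens {W : Type*} (G : SimpleGraph W) (S : Finset W) : ℝ :=
  (edgeCnt G S : ℝ) / (S.card : ℝ)

/-- The first snapshot: a copy of `H` on the `inl` vertices, the `k` new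
vertices being isolated. -/
def G1 {VH : Type*} (H : SimpleGraph VH) (k : ℕ) : SimpleGraph (VH ⊕ Fin k) :=
  SimpleGraph.fromRel (fun a b => ∃ u v, a = Sum.inl u ∧ b = Sum.inl v ∧ H.Adj u v)

/-- The second snapshot: a `k`-clique on the `inr` vertices, the vertices of
`VH` being isolated. -/
def G2 (VH : Type*) (k : ℕ) : SimpleGraph (VH ⊕ Fin k) :=
  SimpleGraph.fromRel (fun a b => ∃ i j : Fin k, a = Sum.inr i ∧ b = Sum.inr j)

namespace SimpleGraph

variable {V W : Type*}

lemma finite_setOf_edge (G : SimpleGraph V) (T : Finset V) :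
    {e ∈ G.edgeSet | ∀ v ∈ e, v ∈ T}.Finite :=
  T.sym2.finite_toSet.subset fun _ he => Finset.mem_sym2_iff.2 he.2

lemma edgeCnt_top (T : Finset V) : edgeCnt ⊤ T = T.card.choose 2 := by
  classical
  have : {e ∈ (⊤ : SimpleGraph V).edgeSet | ∀ v ∈ e, v ∈ T} =
      ↑{e ∈ T.sym2 | ¬e.IsDiag} := by
    ext e
    simp [Finset.mem_sym2_iff, and_comm]
  rw [edgeCnt, this, Set.ncard_coe_finset, Finset.sym2_eq_image, Sym2.filter_image_mk_not_isDiag,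
    Sym2.card_image_offDiag]

lemma setOf_edge_subset_top (G : SimpleGraph V) (T : Finset V) :
    {e ∈ G.edgeSet | ∀ v ∈ e, v ∈ T} ⊆
      {e ∈ (⊤ : SimpleGraph V).edgeSet | ∀ v ∈ e, v ∈ T} :=
  fun _ he => ⟨edgeSet_mono le_top he.1, he.2⟩

lemma edgeCnt_le_choose_two (G : SimpleGraph V) (T : Finset V) :
    edgeCnt G T ≤ T.card.choose 2 :=
  edgeCnt_top T ▸ Set.ncard_le_ncard (setOf_edge_subset_top G T) (finite_setOf_edge ⊤ T)

lemma edgeCnt_eq_choose_two_iff {G : SimpleGraph V} {T : Finset V} :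
    edgeCnt G T = T.card.choose 2 ↔ G.IsClique (T : Set V) := by
  rw [← edgeCnt_top]
  constructor
  · intro h u hu v hv huv
    have hset := Set.eq_of_subset_of_ncard_le (setOf_edge_subset_top G T) h.ge
      (finite_setOf_edge ⊤ T)
    have huv' : s(u, v) ∈ {e ∈ (⊤ : SimpleGraph V).edgeSet | ∀ v ∈ e, v ∈ T} :=
      ⟨huv, by simpa using ⟨hu, hv⟩⟩
    exact (hset ▸ huv').1
  · intro h
    unfold edgeCnt
    congr 1
    refine (setOf_edge_subset_top G T).antisymm ?_
    rintro ⟨u, v⟩ ⟨huv, hT⟩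
    exact ⟨h (hT u (Sym2.mem_mk_left u v)) (hT v (Sym2.mem_mk_right u v)) huv, hT⟩

lemma edgeCnt_map (f : V ↪ W) (G : SimpleGraph V) {S : Finset W} {T : Finset V}
    (hT : ∀ v, v ∈ T ↔ f v ∈ S) : edgeCnt (G.map f) S = edgeCnt G T := by
  have : {e ∈ (G.map f).edgeSet | ∀ w ∈ e, w ∈ S} =
      f.sym2Map '' {e ∈ G.edgeSet | ∀ v ∈ e, v ∈ T} := by
    rw [edgeSet_map]
    ext e
    simp only [Set.mem_ofPred_eq, Set.mem_image]
    constructor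
    · rintro ⟨⟨e', he', rfl⟩, hS⟩
      exact ⟨e', ⟨he', fun v hv => (hT v).2 (hS _ (Sym2.mem_map.2 ⟨v, hv, rfl⟩))⟩, rfl⟩
    · rintro ⟨e', ⟨he', hT'⟩, rfl⟩
      refine ⟨⟨e', he', rfl⟩, fun w hw => ?_⟩
      obtain ⟨v, hv, rfl⟩ := Sym2.mem_map.1 hw
      exact (hT v).1 (hT' v hv)
  rw [edgeCnt, edgeCnt, this, Set.ncard_image_of_injective _ f.sym2Map.injective]

end SimpleGraph

lemma G1_eq_map {VH : Type*} (H : SimpleGraph VH) (k : ℕ) :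
    G1 H k = H.map Function.Embedding.inl := by
  ext (a | a) (b | b) <;> simp +contextual [G1, H.adj_comm, H.ne_of_adj]

lemma G2_eq_map (VH : Type*) (k : ℕ) :
    G2 VH k = (⊤ : SimpleGraph (Fin k)).map Function.Embedding.inr := by
  ext (a | a) (b | b) <;> simp [G2]

lemma dens_eq_and_add_eq_iff {W : Type*} {G G' : SimpleGraph W} {S : Finset W} {c : ℝ}
    (hc : c ≠ 0) :
    dens G S = dens G' S ∧ dens G S + dens G' S = c ↔
      S.Nonempty ∧ edgeCnt G S = edgeCnt G' S ∧ 2 * (edgeCnt G' S : ℝ) = c * S.card := by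
  rcases S.eq_empty_or_nonempty with rfl | hS
  · simp [dens, hc.symm]
  have hn : (S.card : ℝ) ≠ 0 := by positivity
  simp only [dens, hS, true_and, div_left_inj' hn, Nat.cast_inj]
  refine and_congr_right fun h => ?_
  rw [h, ← two_mul, mul_div_assoc', div_eq_iff hn]

lemma eq_of_choose_two_le_of_two_mul_choose_two_eq {a b k : ℕ} (hk : 2 ≤ k) (hb : b ≤ k)
    (hab : 0 < a + b) (hle : b.choose 2 ≤ a.choose 2)
    (h : 2 * (b.choose 2 : ℝ) = ((k : ℝ) - 1) / 2 * (a + b)) :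
    a = k ∧ b = k := by
  have hle' : (b.choose 2 : ℝ) ≤ a.choose 2 := by exact_mod_cast hle
  simp only [Nat.cast_choose_two] at h hle'
  have hk' : (2 : ℝ) ≤ k := by exact_mod_cast hk
  have hb' : (b : ℝ) ≤ k := by exact_mod_cast hb
  have hab' : (1 : ℝ) ≤ a + b := by exact_mod_cast hab
  have hab_le : a ≤ b := by
    have : (a : ℝ) ≤ b := by nlinarith
    exact_mod_cast this
  obtain rfl : a = b := by
    refine hab_le.eq_or_lt.resolve_right fun hlt => ?_
    have : (a : ℝ) + 1 ≤ b := by exact_mod_cast hlt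
    nlinarith
  have ha : (1 : ℝ) ≤ a := by exact_mod_cast (show 1 ≤ a by omega)
  have : (a : ℝ) = k := by
    have : (a : ℝ) * (a - k) = 0 := by linarith
    rcases mul_eq_zero.1 this with h0 | h0 <;> linarith
  exact ⟨by exact_mod_cast this, by exact_mod_cast this⟩

theorem stmt16_general {VH : Type*}
    (H : SimpleGraph VH) (k : ℕ) (hk : 2 ≤ k) :
    (∃ S : Finset (VH ⊕ Fin k),
        dens (G1 H k) S = dens (G2 VH k) S ∧
        dens (G1 H k) S + dens (G2 VH k) S = ((k : ℝ) - 1) / 2) ↔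
    (∃ C : Finset VH, H.IsNClique k C) := by
  have hk' : (2 : ℝ) ≤ k := by exact_mod_cast hk
  have hcnt1 (S : Finset (VH ⊕ Fin k)) : edgeCnt (G1 H k) S = edgeCnt H S.toLeft := by
    rw [G1_eq_map, SimpleGraph.edgeCnt_map _ _ fun _ => Finset.mem_toLeft]
  have hcnt2 (S : Finset (VH ⊕ Fin k)) : edgeCnt (G2 VH k) S = S.toRight.card.choose 2 := by
    rw [G2_eq_map, SimpleGraph.edgeCnt_map _ _ fun _ => Finset.mem_toRight,
      SimpleGraph.edgeCnt_top]
  simp only [dens_eq_and_add_eq_iff (show ((k : ℝ) - 1) / 2 ≠ 0 by linarith), hcnt1, hcnt2,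
    ← Finset.card_toLeft_add_card_toRight]
  constructor
  · rintro ⟨S, hS, hcnt, hsum⟩
    obtain ⟨hC, hR⟩ := eq_of_choose_two_le_of_two_mul_choose_two_eq hk
      ((Finset.card_le_univ _).trans_eq (Fintype.card_fin k))
      (Finset.card_toLeft_add_card_toRight ▸ hS.card_pos)
      (hcnt ▸ H.edgeCnt_le_choose_two S.toLeft) (by exact_mod_cast hsum)
    exact ⟨S.toLeft, SimpleGraph.edgeCnt_eq_choose_two_iff.1 (by rw [hcnt, hC, hR]), hC⟩
  · rintro ⟨C, hC⟩
    refine ⟨C.disjSum Finset.univ, ?_, ?_, ?_⟩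
    · exact ⟨Sum.inr ⟨0, by omega⟩, by simp⟩
    · rw [Finset.toLeft_disjSum, SimpleGraph.edgeCnt_eq_choose_two_iff.2 hC.isClique]
      simp [hC.card_eq]
    · simp only [Finset.toLeft_disjSum, Finset.toRight_disjSum, Finset.card_univ,
        Fintype.card_fin, hC.card_eq, Nat.cast_choose_two, Nat.cast_add]
      ring

theorem stmt16 {VH : Type*} [Fintype VH] [DecidableEq VH]
    (H : SimpleGraph VH) (k : ℕ) (hk : 2 ≤ k) :
    (∃ S : Finset (VH ⊕ Fin k),
        dens (G1 H k) S = dens (G2 VH k) S ∧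
        dens (G1 H k) S + dens (G2 VH k) S = ((k : ℝ) - 1) / 2) ↔
    (∃ C : Finset VH, H.IsNClique k C) :=
  stmt16_general H k hk
end

section
/- If C ⊆ V_H is a k-clique in H, then the set S = {inl v : v ∈ C} ∪ {inr i : i ∈ Fin k} ⊆ W satisfies d(S, G_1) = d(S, G_2) = (k − 1)/4; in particular d(S, G_1) + d(S, G_2) = (k − 1)/2 and d(S, G_1) − d(S, G_2) = 0. -/
open scoped Finset

theorem Finset.image_inl_union_image_inr {α β : Type*} [DecidableEq α] [DecidableEq β]
    (s : Finset α) (t : Finset β) : s.image Sum.inl ∪ t.image Sum.inr = s.disjSum t := by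
  ext x
  cases x <;> simp

section Density

variable {W : Type*}

theorem edgeCnt_of_isClique {G : SimpleGraph W} {T : Finset W} (hT : G.IsClique (T : Set W)) :
    edgeCnt G T = (#T).choose 2 := by
  classical
  have hedges : {e ∈ G.edgeSet | ∀ v ∈ e, v ∈ T} =
      Sym2.map (↑) '' (⊤ : SimpleGraph T).edgeSet := by
    ext e
    constructor
    · induction e using Sym2.ind with
      | _ a b =>
        rintro ⟨hab, hmem⟩
        refine ⟨s(⟨a, hmem a (Sym2.mem_mk_left a b)⟩, ⟨b, hmem b (Sym2.mem_mk_right a b)⟩), ?_, rfl⟩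
        simpa [Subtype.ext_iff] using hab.ne
    · rintro ⟨e', he', rfl⟩
      induction e' using Sym2.ind with
      | _ x y => exact ⟨hT x.2 y.2 (Subtype.coe_ne_coe.2 he'), by simp⟩
  rw [edgeCnt, hedges, Set.ncard_image_of_injective _ (Sym2.map.injective Subtype.val_injective),
    ← SimpleGraph.coe_edgeFinset, Set.ncard_coe_finset,
    SimpleGraph.card_edgeFinset_top_eq_card_choose_two, Fintype.card_coe]

theorem edgeCnt_union_of_isolated [DecidableEq W] {G : SimpleGraph W} {T U : Finset W}
    (hU : ∀ u ∈ U, ∀ w, ¬G.Adj u w) : edgeCnt G (T ∪ U) = edgeCnt G T := by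
  have hT : ∀ a b, G.Adj a b → a ∈ T ∪ U → a ∈ T := fun a b hab ha =>
    (Finset.mem_union.1 ha).resolve_right fun haU => hU a haU b hab
  unfold edgeCnt
  congr 1
  ext e
  induction e using Sym2.ind with
  | _ a b =>
    simp only [Set.mem_ofPred_eq, SimpleGraph.mem_edgeSet, Sym2.mem_iff, forall_eq_or_imp,
      forall_eq]
    exact ⟨fun ⟨hab, ha, hb⟩ => ⟨hab, hT a b hab ha, hT b a hab.symm hb⟩,
      fun ⟨hab, ha, hb⟩ => ⟨hab, Finset.mem_union_left U ha, Finset.mem_union_left U hb⟩⟩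

theorem dens_eq_of_edgeCnt_eq_choose_two {G : SimpleGraph W} {S : Finset W} {k : ℕ}
    (hk : k ≠ 0) (hS : #S = 2 * k) (hG : edgeCnt G S = k.choose 2) :
    dens G S = ((k : ℝ) - 1) / 4 := by
  rw [dens, hG, hS, Nat.cast_choose_two]
  push_cast
  field_simp
  ring

end Density

section Snapshots

variable {VH : Type*} {k : ℕ}

theorem G1_adj_inl_inl {H : SimpleGraph VH} {u v : VH} :
    (G1 H k).Adj (Sum.inl u) (Sum.inl v) ↔ H.Adj u v := by
  simp only [G1, SimpleGraph.fromRel_adj]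
  constructor
  · rintro ⟨-, ⟨u, v, ⟨⟩, ⟨⟩, h⟩ | ⟨u, v, ⟨⟩, ⟨⟩, h⟩⟩
    exacts [h, h.symm]
  · exact fun h => ⟨by simpa using h.ne, Or.inl ⟨u, v, rfl, rfl, h⟩⟩

theorem G1_not_adj_inr (H : SimpleGraph VH) (i : Fin k) (w : VH ⊕ Fin k) :
    ¬(G1 H k).Adj (Sum.inr i) w := by
  simp [G1]

theorem G2_not_adj_inl (u : VH) (w : VH ⊕ Fin k) : ¬(G2 VH k).Adj (Sum.inl u) w := by
  simp [G2]

theorem G1_isClique_image_inl [DecidableEq VH] {H : SimpleGraph VH} {C : Finset VH}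
    (hC : H.IsClique (C : Set VH)) :
    (G1 H k).IsClique ((C.image Sum.inl : Finset (VH ⊕ Fin k)) : Set (VH ⊕ Fin k)) := by
  intro x hx y hy hxy
  simp only [Finset.coe_image, Set.mem_image, Finset.mem_coe] at hx hy
  obtain ⟨u, hu, rfl⟩ := hx
  obtain ⟨v, hv, rfl⟩ := hy
  exact G1_adj_inl_inl.2 (hC hu hv fun h => hxy (h ▸ rfl))

theorem G2_isClique_image_inr [DecidableEq VH] (s : Finset (Fin k)) :
    (G2 VH k).IsClique ((s.image Sum.inr : Finset (VH ⊕ Fin k)) : Set (VH ⊕ Fin k)) := by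
  intro x hx y hy hxy
  simp only [Finset.coe_image, Set.mem_image, Finset.mem_coe] at hx hy
  obtain ⟨i, -, rfl⟩ := hx
  obtain ⟨j, -, rfl⟩ := hy
  simpa [G2] using hxy

end Snapshots

theorem stmt17_general {VH : Type*} [DecidableEq VH]
    (H : SimpleGraph VH) (k : ℕ) (hk : 2 ≤ k)
    (C : Finset VH) (hC : H.IsNClique k C) :
    dens (G1 H k) (C.image Sum.inl ∪ (Finset.univ : Finset (Fin k)).image Sum.inr)
        = ((k : ℝ) - 1) / 4 ∧
    dens (G2 VH k) (C.image Sum.inl ∪ (Finset.univ : Finset (Fin k)).image Sum.inr)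
        = ((k : ℝ) - 1) / 4 ∧
    dens (G1 H k) (C.image Sum.inl ∪ (Finset.univ : Finset (Fin k)).image Sum.inr) +
      dens (G2 VH k) (C.image Sum.inl ∪ (Finset.univ : Finset (Fin k)).image Sum.inr)
        = ((k : ℝ) - 1) / 2 ∧
    dens (G1 H k) (C.image Sum.inl ∪ (Finset.univ : Finset (Fin k)).image Sum.inr) -
      dens (G2 VH k) (C.image Sum.inl ∪ (Finset.univ : Finset (Fin k)).image Sum.inr)
        = 0 := by
  have hk0 : k ≠ 0 := by omega
  have hcard : #(C.image Sum.inl ∪ (Finset.univ : Finset (Fin k)).image Sum.inr) = 2 * k := by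
    rw [Finset.image_inl_union_image_inr, Finset.card_disjSum, hC.card_eq, Finset.card_univ,
      Fintype.card_fin, two_mul]
  have h1 : dens (G1 H k) (C.image Sum.inl ∪ Finset.univ.image Sum.inr) = ((k : ℝ) - 1) / 4 := by
    refine dens_eq_of_edgeCnt_eq_choose_two hk0 hcard ?_
    rw [edgeCnt_union_of_isolated (by simp [G1_not_adj_inr]),
      edgeCnt_of_isClique (G1_isClique_image_inl hC.isClique),
      Finset.card_image_of_injective _ Sum.inl_injective, hC.card_eq]
  have h2 : dens (G2 VH k) (C.image Sum.inl ∪ Finset.univ.image Sum.inr) = ((k : ℝ) - 1) / 4 := by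
    refine dens_eq_of_edgeCnt_eq_choose_two hk0 hcard ?_
    rw [Finset.union_comm, edgeCnt_union_of_isolated (by simp [G2_not_adj_inl]),
      edgeCnt_of_isClique (G2_isClique_image_inr _),
      Finset.card_image_of_injective _ Sum.inr_injective, Finset.card_univ, Fintype.card_fin]
  refine ⟨h1, h2, ?_, ?_⟩ <;> rw [h1, h2] <;> ring

theorem stmt17 {VH : Type*} [Fintype VH] [DecidableEq VH]
    (H : SimpleGraph VH) (k : ℕ) (hk : 2 ≤ k)
    (C : Finset VH) (hC : H.IsNClique k C) :
    dens (G1 H k) (C.image Sum.inl ∪ (Finset.univ : Finset (Fin k)).image Sum.inr)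
        = ((k : ℝ) - 1) / 4 ∧
    dens (G2 VH k) (C.image Sum.inl ∪ (Finset.univ : Finset (Fin k)).image Sum.inr)
        = ((k : ℝ) - 1) / 4 ∧
    dens (G1 H k) (C.image Sum.inl ∪ (Finset.univ : Finset (Fin k)).image Sum.inr) +
      dens (G2 VH k) (C.image Sum.inl ∪ (Finset.univ : Finset (Fin k)).image Sum.inr)
        = ((k : ℝ) - 1) / 2 ∧
    dens (G1 H k) (C.image Sum.inl ∪ (Finset.univ : Finset (Fin k)).image Sum.inr) -
      dens (G2 VH k) (C.image Sum.inl ∪ (Finset.univ : Finset (Fin k)).image Sum.inr)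
        = 0 :=
  stmt17_general H k hk C hC
end
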